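/- arXiv:math/0210160 — 3 statements merged into one kernel-verified Lean document; each statement's English description precedes it below -/
import Mathlib

section
/- Let R be an algebraic curvature tensor on V = H ⊕ H⊥ with: (i) H totally geodesic symmetry in the sense that R(X,Y,V,X') = 0 whenever X,Y,X' ∈ H and V ∈ H⊥ (curvature with three tangent and one normal entry vanishes), (ii) mixed curvatures vanish: R(X,U)U' = 0 for X ∈ H, U,U' ∈ H⊥, and (iii) R(X,Y)U = 2R(X,U)Y for X,Y ∈ H, U ∈ H⊥. Then for all X,Y ∈ H and U,V ∈ H⊥: k(X+U, Y+V) = k_Σ(X,Y) + k_F(U,V) - 3R(X,Y,U,V), where k(A,B) = R(A,B,B,A), k_Σ is k restricted to H, and k_F is k restricted to H⊥. -/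
/-!
The symmetries of `R` give `R A B C D = R D C B A`, so the sixteen terms of the multilinear
expansion of `R (X+U) (Y+W) (Y+W) (X+U)` pair off. The terms with three entries in one of
`H`, `Hᗮ` and the mixed sectional terms `R X W W X`, `R U Y Y U` vanish by hypothesis; the two
remaining cross terms are `-R X Y U W` and, via `R X Y W U = 2 R X W Y U`, `-R X Y U W / 2`,
each occurring twice, which gives the coefficient `-3`.
-/

section CurvatureForm

variable {𝕜 V : Type*} [CommRing 𝕜] [AddCommGroup V] [Module 𝕜 V]
  (R : V →ₗ[𝕜] V →ₗ[𝕜] V →ₗ[𝕜] V →ₗ[𝕜] 𝕜)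

theorem apply_eq_apply_reverse_of_symmetries
    (hanti1 : ∀ A B C D : V, R A B C D = - R B A C D)
    (hanti2 : ∀ A B C D : V, R A B C D = - R A B D C)
    (hpair : ∀ A B C D : V, R A B C D = R C D A B) (A B C D : V) :
    R A B C D = R D C B A := by
  rw [hpair, hanti1, hanti2, neg_neg]

theorem apply_add_add_add_add_of_reverse (hrev : ∀ A B C D : V, R A B C D = R D C B A)
    (X U Y W : V) :
    R (X + U) (Y + W) (Y + W) (X + U) =
      R X Y Y X + R U W W U + R X W W X + R U Y Y U +
        2 * (R X Y Y U + R X Y W X + R X W W U + R U Y W U + R X Y W U + R X W Y U) := by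
  simp only [map_add, LinearMap.add_apply]
  rw [hrev U Y Y X, hrev X W Y X, hrev U W W X, hrev U W Y U, hrev U W Y X, hrev U Y W X]
  ring

end CurvatureForm

/-- Walschap's formula: `k(X+U, Y+V) = k_Σ(X,Y) + k_F(U,V) - 3 R(X,Y,U,V)` at the soul. -/
theorem stmt_12 {V : Type*} [NormedAddCommGroup V] [InnerProductSpace ℝ V]
    (H : Submodule ℝ V)
    (R : V →ₗ[ℝ] V →ₗ[ℝ] V →ₗ[ℝ] V →ₗ[ℝ] ℝ)
    (hanti1 : ∀ A B C D : V, R A B C D = - R B A C D)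
    (hanti2 : ∀ A B C D : V, R A B C D = - R A B D C)
    (hpair : ∀ A B C D : V, R A B C D = R C D A B)
    (htg : ∀ X ∈ H, ∀ Y ∈ H, ∀ X' ∈ H, ∀ U ∈ Hᗮ, R X Y U X' = 0)
    (hmix : ∀ X ∈ H, ∀ U ∈ Hᗮ, ∀ U' ∈ Hᗮ, ∀ D : V, R X U U' D = 0)
    (hcross : ∀ X ∈ H, ∀ Y ∈ H, ∀ U ∈ Hᗮ, ∀ D : V, R X Y U D = 2 * R X U Y D) :
    ∀ X ∈ H, ∀ Y ∈ H, ∀ U ∈ Hᗮ, ∀ W ∈ Hᗮ,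
      R (X + U) (Y + W) (Y + W) (X + U) =
        R X Y Y X + R U W W U - 3 * R X Y U W := by
  intro X hX Y hY U hU W hW
  have hXYYU : R X Y Y U = 0 := by rw [hanti2, htg X hX Y hY Y hY U hU, neg_zero]
  have hXYWX : R X Y W X = 0 := htg X hX Y hY X hX W hW
  have hXWWU : R X W W U = 0 := hmix X hX W hW W hW U
  have hUYWU : R U Y W U = 0 := by rw [hanti1, hmix Y hY U hU W hW U, neg_zero]
  have hXWWX : R X W W X = 0 := hmix X hX W hW W hW X
  have hUYYU : R U Y Y U = 0 := by rw [hanti1, hanti2, neg_neg, hmix Y hY U hU U hU Y]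
  rw [apply_add_add_add_add_of_reverse R
      (apply_eq_apply_reverse_of_symmetries R hanti1 hanti2 hpair),
    hXYYU, hXYWX, hXWWU, hUYWU, hXWWX, hUYYU]
  linear_combination 3 * hanti2 X Y W U - hcross X hX Y hY W hW U
end

section
/- Let F : V × V × V → ℝ (V a finite-dimensional inner product space) be smooth in the first argument and bilinear symmetric positive-definite in the last two for each fixed first argument, satisfying F(W,W,U) = F(0,W,U) = ⟨W,U⟩ for all W,U. Then d/dt|_{t=0} F(tW,U,V) = 0 for all W,U,V ∈ V. -/
open RealInnerProductSpace

/-- Property 3 of warping functions: a function `F` that is smooth in its first argument,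
symmetric positive-definite bilinear in its last two, and satisfies
`F(W,W,U) = F(0,W,U) = ⟪W,U⟫`, has vanishing first radial derivative. -/
theorem stmt_13 {V : Type*} [NormedAddCommGroup V] [InnerProductSpace ℝ V]
    [FiniteDimensional ℝ V]
    (F : V → V → V → ℝ)
    (hsmooth : ∀ U V' : V, ContDiff ℝ (⊤ : ℕ∞) (fun W => F W U V'))
    (hlin : ∀ W V' : V, IsLinearMap ℝ (fun U => F W U V'))
    (hsymm : ∀ W U V' : V, F W U V' = F W V' U)
    (hposdef : ∀ W U : V, U ≠ 0 → 0 < F W U U)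
    (hW : ∀ W U : V, F W W U = ⟪W, U⟫ ∧ F 0 W U = ⟪W, U⟫) :
    ∀ W U V' : V, deriv (fun t : ℝ => F (t • W) U V') 0 = 0 := by
  have hdiff : ∀ U V' : V, DifferentiableAt ℝ (fun W => F W U V') 0 :=
    fun U V' => ((hsmooth U V').differentiable (by simp)).differentiableAt
  set A : V → V → V → ℝ := fun W U V' => fderiv ℝ (fun X => F X U V') 0 W with hA
  -- the deriv in question equals A
  have hderiv : ∀ W U V' : V, deriv (fun t : ℝ => F (t • W) U V') 0 = A W U V' := by
    intro W U V'
    have h1 : HasDerivAt (fun t : ℝ => t • W) W 0 := by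
      simpa using (hasDerivAt_id (0 : ℝ)).smul_const W
    have h2 : HasFDerivAt (fun X => F X U V') (fderiv ℝ (fun X => F X U V') 0)
        ((fun t : ℝ => t • W) 0) := by
      simpa using (hdiff U V').hasFDerivAt
    have h3 := h2.comp_hasDerivAt 0 h1
    exact h3.deriv
  -- A is additive in the first slot
  have hadd1 : ∀ W X U V' : V, A (W + X) U V' = A W U V' + A X U V' := by
    intro W X U V'
    simp [hA, map_add]
  -- A is additive in the second slot
  have hadd2 : ∀ W U U' V' : V, A W (U + U') V' = A W U V' + A W U' V' := by
    intro W U U' V'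
    have hfun : (fun X => F X (U + U') V') = fun X => F X U V' + F X U' V' :=
      funext fun X => (hlin X V').map_add U U'
    simp only [hA, hfun]
    rw [fderiv_fun_add (hdiff U V') (hdiff U' V')]
    simp
  -- symmetry in last two slots
  have hsy : ∀ W U V' : V, A W U V' = A W V' U := by
    intro W U V'
    have : (fun X => F X U V') = fun X => F X V' U := funext fun X => hsymm X U V'
    simp [hA, this]
  -- key: A W W U = 0
  have hkey : ∀ W U : V, A W W U = 0 := by
    intro W U
    have hconst : (fun t : ℝ => F (t • W) W U) = fun _ => ⟪W, U⟫ := by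
      funext t
      rcases eq_or_ne t 0 with rfl | ht
      · simpa using (hW W U).2
      · have h1 : F (t • W) (t • W) U = ⟪t • W, U⟫ := (hW (t • W) U).1
        have h2 : F (t • W) (t • W) U = t * F (t • W) W U := by
          simpa [smul_eq_mul] using (hlin (t • W) U).map_smul t W
        have h3 : ⟪t • W, U⟫ = t * ⟪W, U⟫ := real_inner_smul_left W U t
        exact mul_left_cancel₀ ht (by rw [← h2, h1, h3])
    have := hderiv W W U
    rw [hconst] at this
    simpa using this.symm
  -- antisymmetry in the first two slots
  have hanti : ∀ W X U : V, A W X U = - A X W U := by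
    intro W X U
    have h := hkey (W + X) U
    rw [hadd1] at h
    rw [hadd2, hadd2] at h
    rw [hkey W U, hkey X U] at h
    linarith
  -- A vanishes
  have hzero : ∀ W U V' : V, A W U V' = 0 := by
    intro W U V'
    have h1 : A W U V' = - A U W V' := hanti W U V'
    have h2 : A U W V' = A U V' W := hsy U W V'
    have h3 : A U V' W = - A V' U W := hanti U V' W
    have h4 : A V' U W = A V' W U := hsy V' U W
    have h5 : A V' W U = - A W V' U := hanti V' W U
    have h6 : A W V' U = A W U V' := (hsy W U V').symm
    linarith
  intro W U V'
  rw [hderiv W U V', hzero]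
end

section
/- Let f : ℝⁿ → ℝ be C² with f(0) = 0 and Df(0) = 0, and suppose the Hessian D²f(0) is positive definite on a closed cone T ⊆ ℝⁿ, i.e. strictly positive on every nonzero vector of T. Then for any set S ⊆ ℝⁿ whose tangent cone at 0 is contained in T, there is δ > 0 such that f(x) > 0 for all x ∈ S with 0 < |x| < δ. -/
set_option maxHeartbeats 1000000


open Filter

private lemma mvt_key {n : ℕ} (f : EuclideanSpace ℝ (Fin n) → ℝ)
    (hC2 : ContDiff ℝ 2 f) (hf0 : f 0 = 0) (hdf : fderiv ℝ f 0 = 0)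
    (x : EuclideanSpace ℝ (Fin n)) :
    ∃ c ∈ Set.Ioo (0:ℝ) 1, ∃ t ∈ Set.Ioo (0:ℝ) 1,
      f x = c * (fderiv ℝ (fderiv ℝ f) (t • x)) x x := by
  set H := fderiv ℝ (fderiv ℝ f) with hH
  have hdf1 : ContDiff ℝ 1 (fderiv ℝ f) := hC2.fderiv_right (by norm_num)
  have hdiff : Differentiable ℝ f := hC2.differentiable (by norm_num)
  have hline : ∀ t : ℝ, HasDerivAt (fun s : ℝ => s • x) x t := by
    intro t; simpa using (hasDerivAt_id t).smul_const x
  have hg : ∀ t : ℝ, HasDerivAt (fun s => f (s • x)) ((fderiv ℝ f (t • x)) x) t := by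
    intro t
    exact (hdiff (t • x)).hasFDerivAt.comp_hasDerivAt t (hline t)
  obtain ⟨c, hc, hceq⟩ := exists_hasDerivAt_eq_slope (fun s => f (s • x))
    (fun s => (fderiv ℝ f (s • x)) x) zero_lt_one
    (fun s _ => (hg s).continuousAt.continuousWithinAt) (fun s _ => hg s)
  have hceq' : (fderiv ℝ f (c • x)) x = f x := by
    simpa [hf0] using hceq
  have hψ : ∀ t : ℝ, HasDerivAt (fun s => (fderiv ℝ f (s • x)) x) ((H (t • x)) x x) t := by
    intro t
    have h2 : HasDerivAt (fun s : ℝ => fderiv ℝ f (s • x)) ((H (t • x)) x) t :=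
      (hdf1.differentiable (by norm_num) (t • x)).hasFDerivAt.comp_hasDerivAt t (hline t)
    simpa using h2.clm_apply (hasDerivAt_const t x)
  obtain ⟨t, ht, hteq⟩ := exists_hasDerivAt_eq_slope (fun s => (fderiv ℝ f (s • x)) x)
    (fun s => (H (s • x)) x x) hc.1
    (fun s _ => (hψ s).continuousAt.continuousWithinAt) (fun s _ => hψ s)
  refine ⟨c, hc, t, ⟨ht.1, ht.2.trans hc.2⟩, ?_⟩
  have h0 : (fderiv ℝ f ((0:ℝ) • x)) x = 0 := by simp [hdf]
  rw [hceq', h0, sub_zero, sub_zero] at hteq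
  rw [hteq, mul_comm, div_mul_cancel₀ _ hc.1.ne']

/-- Hessian positivity on a cone: if `f` is `C²`, `f(0) = 0`, `Df(0) = 0`, and the
Hessian at `0` is positive definite on a closed cone `T` containing the tangent cone
of `S` at `0`, then `f > 0` on a punctured neighborhood of `0` in `S`. -/
theorem stmt_17 {n : ℕ}
    (f : EuclideanSpace ℝ (Fin n) → ℝ)
    (hC2 : ContDiff ℝ 2 f) (hf0 : f 0 = 0) (hdf : fderiv ℝ f 0 = 0)
    (T : Set (EuclideanSpace ℝ (Fin n)))
    (hTclosed : IsClosed T)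
    (hTcone : ∀ v ∈ T, ∀ c : ℝ, 0 ≤ c → c • v ∈ T)
    (hHess : ∀ v ∈ T, v ≠ 0 → 0 < iteratedFDeriv ℝ 2 f 0 ![v, v])
    (S : Set (EuclideanSpace ℝ (Fin n)))
    (hS : ∀ v : EuclideanSpace ℝ (Fin n),
      (∃ x : ℕ → EuclideanSpace ℝ (Fin n),
        (∀ k, x k ∈ S) ∧ (∀ k, x k ≠ 0) ∧
        Tendsto x atTop (nhds 0) ∧
        Tendsto (fun k => ‖x k‖⁻¹ • x k) atTop (nhds v)) → v ∈ T) :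
    ∃ δ > 0, ∀ x ∈ S, x ≠ 0 → ‖x‖ < δ → 0 < f x := by
  by_contra hcon
  push_neg at hcon
  -- a sequence x k ∈ S, x k ≠ 0, ‖x k‖ < 1/(k+1), f (x k) ≤ 0
  have hseq : ∀ k : ℕ, ∃ x ∈ S, x ≠ 0 ∧ ‖x‖ < 1 / (k + 1) ∧ f x ≤ 0 := by
    intro k
    obtain ⟨x, hxS, hx0, hxn, hfx⟩ := hcon (1 / (k + 1)) (by positivity)
    exact ⟨x, hxS, hx0, hxn, hfx⟩
  choose x hxS hx0 hxn hfx using hseq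
  have hxlim : Tendsto x atTop (nhds 0) := by
    rw [tendsto_zero_iff_norm_tendsto_zero]
    refine squeeze_zero (fun k => norm_nonneg _) (fun k => (hxn k).le) ?_
    exact tendsto_one_div_add_atTop_nhds_zero_nat
  set u : ℕ → EuclideanSpace ℝ (Fin n) := fun k => ‖x k‖⁻¹ • x k with hu
  have hunorm : ∀ k, u k ∈ Metric.sphere (0 : EuclideanSpace ℝ (Fin n)) 1 := by
    intro k
    have hnx : ‖x k‖ ≠ 0 := norm_ne_zero_iff.mpr (hx0 k)
    simp [hu, norm_smul, abs_of_nonneg (inv_nonneg.mpr (norm_nonneg _)),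
      inv_mul_cancel₀ hnx]
  obtain ⟨v, hv, φ, hφ, hulim⟩ :=
    (isCompact_sphere (0 : EuclideanSpace ℝ (Fin n)) 1).tendsto_subseq hunorm
  have hvT : v ∈ T := by
    refine hS v ⟨x ∘ φ, fun k => hxS _, fun k => hx0 _, ?_, ?_⟩
    · exact hxlim.comp hφ.tendsto_atTop
    · exact hulim
  have hv1 : ‖v‖ = 1 := by simpa using hv
  have hvne : v ≠ 0 := by intro h; rw [h] at hv1; simp at hv1
  set H := fderiv ℝ (fderiv ℝ f) with hH
  have hHpos : 0 < H 0 v v := by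
    have := hHess v hvT hvne
    rwa [iteratedFDeriv_two_apply] at this
  -- continuity of (y, w) ↦ H y w w
  have hdf1 : ContDiff ℝ 1 (fderiv ℝ f) := hC2.fderiv_right (by norm_num)
  have hHcont : Continuous H := hdf1.continuous_fderiv (by norm_num)
  have hGcont : Continuous fun p : (EuclideanSpace ℝ (Fin n)) × (EuclideanSpace ℝ (Fin n)) =>
      H p.1 p.2 p.2 :=
    ((hHcont.comp continuous_fst).clm_apply continuous_snd).clm_apply continuous_snd
  -- mean value data for each point of the subsequence
  have hkey : ∀ k : ℕ, ∃ t ∈ Set.Ioo (0:ℝ) 1,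
      H (t • x (φ k)) (u (φ k)) (u (φ k)) ≤ 0 := by
    intro k
    obtain ⟨c, hc, t, ht, heq⟩ := mvt_key f hC2 hf0 hdf (x (φ k))
    refine ⟨t, ht, ?_⟩
    have hle : H (t • x (φ k)) (x (φ k)) (x (φ k)) ≤ 0 := by
      have hf' : f (x (φ k)) ≤ 0 := hfx _
      nlinarith [heq, hc.1]
    have hnx : (0:ℝ) < ‖x (φ k)‖ := norm_pos_iff.mpr (hx0 _)
    have hrepr : x (φ k) = ‖x (φ k)‖ • u (φ k) := (smul_inv_smul₀ hnx.ne' _).symm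
    set yk := t • x (φ k) with hyk
    rw [hrepr] at hle
    simp only [map_smul, ContinuousLinearMap.smul_apply, smul_eq_mul] at hle
    nlinarith [hle, hnx, mul_pos hnx hnx]
  choose t ht hHle using hkey
  set y : ℕ → EuclideanSpace ℝ (Fin n) := fun k => t k • x (φ k) with hy
  have hylim : Tendsto y atTop (nhds 0) := by
    rw [tendsto_zero_iff_norm_tendsto_zero]
    refine squeeze_zero (g := fun k => ‖x (φ k)‖) (fun k => norm_nonneg _) (fun k => ?_) ?_
    · show ‖t k • x (φ k)‖ ≤ ‖x (φ k)‖
      rw [norm_smul]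
      calc ‖t k‖ * ‖x (φ k)‖ ≤ 1 * ‖x (φ k)‖ := by
            apply mul_le_mul_of_nonneg_right _ (norm_nonneg _)
            rw [Real.norm_eq_abs, abs_of_pos (ht k).1]
            exact (ht k).2.le
        _ = ‖x (φ k)‖ := one_mul _
    · exact (tendsto_zero_iff_norm_tendsto_zero.mp (hxlim.comp hφ.tendsto_atTop))
  have hpair : Tendsto (fun k => (y k, u (φ k))) atTop (nhds (0, v)) :=
    hylim.prodMk_nhds hulim
  have hlim : Tendsto (fun k => H (y k) (u (φ k)) (u (φ k))) atTop (nhds (H 0 v v)) :=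
    (hGcont.tendsto (0, v)).comp hpair
  have : H 0 v v ≤ 0 := le_of_tendsto hlim (Eventually.of_forall hHle)
  linarith
end
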